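/- arXiv:2602.10795 — 5 statements merged into one kernel-verified Lean document; each statement's English description precedes it below -/
import Mathlib

section
/- Let Γ be a d-dimensional grid graph on vertex set [n₁] × ... × [n_d], where two vertices are adjacent iff they differ in exactly one coordinate. Let σ be an orientation of the edges of Γ. Suppose (i) every induced subgrid (induced by a product N₁ × ... × N_d of nonempty subsets N_i ⊆ [n_i]) has at least one sink under σ, and (ii) σ restricted to every subcube (an induced subgrid with all |N_i| ≤ 2) is a unique sink orientation. Then σ is a unique sink orientation of Γ, i.e., every induced subgrid has exactly one sink. -/
/-- Two grid vertices are adjacent iff they differ in exactly one coordinate. -/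
def GridAdj {d : ℕ} {n : Fin d → ℕ} (u v : ∀ i, Fin (n i)) : Prop :=
  ∃ i, u i ≠ v i ∧ ∀ j, j ≠ i → u j = v j

/-- `v` is a sink of the induced subgrid on `N₁ × ⋯ × N_d` under orientation `orient`. -/
def IsSinkIn {d : ℕ} {n : Fin d → ℕ}
    (orient : (∀ i, Fin (n i)) → (∀ i, Fin (n i)) → Prop)
    (N : ∀ i, Set (Fin (n i))) (v : ∀ i, Fin (n i)) : Prop :=
  (∀ i, v i ∈ N i) ∧ ∀ w, (∀ i, w i ∈ N i) → GridAdj v w → ¬ orient v w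

/- Two sinks `u`, `v` of a subgrid are also sinks of the subcube `∏ i, {u i, v i}` that
they span inside it, so they coincide by uniqueness of the sink of that subcube. -/

theorem Set.encard_pair_le_two {α : Type*} (x y : α) : ({x, y} : Set α).encard ≤ 2 :=
  (Set.encard_insert_le _ _).trans_eq (by rw [Set.encard_singleton]; rfl)

theorem IsSinkIn.mono {d : ℕ} {n : Fin d → ℕ}
    {orient : (∀ i, Fin (n i)) → (∀ i, Fin (n i)) → Prop} {M N : ∀ i, Set (Fin (n i))}
    {v : ∀ i, Fin (n i)} (hv : IsSinkIn orient N v) (hMN : ∀ i, M i ⊆ N i)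
    (hvM : ∀ i, v i ∈ M i) : IsSinkIn orient M v :=
  ⟨hvM, fun w hw => hv.2 w fun i => hMN i (hw i)⟩

theorem IsSinkIn.eq_of_subcube_unique {d : ℕ} {n : Fin d → ℕ}
    {orient : (∀ i, Fin (n i)) → (∀ i, Fin (n i)) → Prop}
    (hcube : ∀ N : ∀ i, Set (Fin (n i)), (∀ i, (N i).Nonempty) →
      (∀ i, (N i).encard ≤ 2) → ∃! v, IsSinkIn orient N v)
    {N : ∀ i, Set (Fin (n i))} {u v : ∀ i, Fin (n i)}
    (hu : IsSinkIn orient N u) (hv : IsSinkIn orient N v) : u = v := by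
  let M : ∀ i, Set (Fin (n i)) := fun i => {u i, v i}
  have hMN : ∀ i, M i ⊆ N i := fun i =>
    Set.insert_subset (hu.1 i) (Set.singleton_subset_iff.2 (hv.1 i))
  obtain ⟨w, -, hw⟩ := hcube M (fun i => Set.insert_nonempty _ _)
    (fun i => Set.encard_pair_le_two _ _)
  have huM : IsSinkIn orient M u := hu.mono hMN fun i => Set.mem_insert _ _
  have hvM : IsSinkIn orient M v := hv.mono hMN fun i => Set.mem_insert_of_mem _ rfl
  exact (hw u huM).trans (hw v hvM).symm

theorem stmt0_general {d : ℕ} {n : Fin d → ℕ}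
    (orient : (∀ i, Fin (n i)) → (∀ i, Fin (n i)) → Prop)
    (hsink : ∀ N : ∀ i, Set (Fin (n i)), (∀ i, (N i).Nonempty) →
      ∃ v, IsSinkIn orient N v)
    (hcube : ∀ N : ∀ i, Set (Fin (n i)), (∀ i, (N i).Nonempty) →
      (∀ i, (N i).encard ≤ 2) → ∃! v, IsSinkIn orient N v) :
    ∀ N : ∀ i, Set (Fin (n i)), (∀ i, (N i).Nonempty) →
      ∃! v, IsSinkIn orient N v := by
  intro N hN
  obtain ⟨v, hv⟩ := hsink N hN
  exact ⟨v, hv, fun u hu => hu.eq_of_subcube_unique hcube hv⟩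

/-- If every induced subgrid has a sink and every subcube has a unique sink,
then every induced subgrid has a unique sink. -/
theorem stmt0 {d : ℕ} {n : Fin d → ℕ}
    (orient : (∀ i, Fin (n i)) → (∀ i, Fin (n i)) → Prop)
    (horient : ∀ u v, GridAdj u v → (orient u v ↔ ¬ orient v u))
    (hsink : ∀ N : ∀ i, Set (Fin (n i)), (∀ i, (N i).Nonempty) →
      ∃ v, IsSinkIn orient N v)
    (hcube : ∀ N : ∀ i, Set (Fin (n i)), (∀ i, (N i).Nonempty) →
      (∀ i, (N i).encard ≤ 2) → ∃! v, IsSinkIn orient N v) :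
    ∀ N : ∀ i, Set (Fin (n i)), (∀ i, (N i).Nonempty) →
      ∃! v, IsSinkIn orient N v :=
  stmt0_general orient hsink hcube
end

section
/- Let σ be a unique sink orientation of the d-dimensional grid graph on [n₁] × ... × [n_d]. Define the outmap r that assigns to each vertex v the tuple (a₁, ..., a_d), where a_i is the number of outgoing edges of v in dimension i (i.e., the number of vertices w adjacent to v differing from v only in coordinate i such that the edge vw is oriented from v to w). Then r is a bijection from [n₁] × ... × [n_d] to {0, ..., n₁−1} × ... × {0, ..., n_d−1}. -/
/-- The outmap: the number of outgoing edges of `v` in dimension `i`. -/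
noncomputable def outmapCount {d : ℕ} {n : Fin d → ℕ}
    (orient : (∀ i, Fin (n i)) → (∀ i, Fin (n i)) → Prop)
    (v : ∀ i, Fin (n i)) (i : Fin d) : ℕ :=
  {x : Fin (n i) | x ≠ v i ∧ orient v (Function.update v i x)}.ncard

open Finset

theorem eqOn_of_sum_prod_choose_smul_eq {ι M : Type*} [Fintype ι] [AddCancelCommMonoid M]
    {s : Finset (ι → ℕ)} {f g : (ι → ℕ) → M}
    (h : ∀ j ∈ s, ∑ c ∈ s, (∏ i, (c i).choose (j i)) • f c =
      ∑ c ∈ s, (∏ i, (c i).choose (j i)) • g c) :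
    Set.EqOn f g s := by
  classical
  intro c₀ hc₀
  by_contra hne
  obtain ⟨c, hc, hmax⟩ := exists_max_image {c ∈ s | f c ≠ g c} (fun c => ∑ i, c i)
    ⟨c₀, mem_filter.2 ⟨hc₀, hne⟩⟩
  rw [mem_filter] at hc
  have hrest : ∀ b ∈ s.erase c,
      (∏ i, (b i).choose (c i)) • f b = (∏ i, (b i).choose (c i)) • g b := by
    intro b hb
    obtain ⟨hbc, hb⟩ := mem_erase.1 hb
    by_cases hfg : f b = g b
    · rw [hfg]
    -- `c` is maximal among the disagreements, so it is not below `b`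
    have : ¬ c ≤ b := fun hcb =>
      (hmax b (mem_filter.2 ⟨hb, hfg⟩)).not_gt (sum_lt_sum (fun i _ => hcb i)
        (by simpa using (Pi.lt_def.1 (lt_of_le_of_ne hcb hbc.symm)).2))
    obtain ⟨i, hi⟩ : ∃ i, b i < c i := by simpa [Pi.le_def] using this
    rw [prod_eq_zero (mem_univ i) (Nat.choose_eq_zero_of_lt hi), zero_smul, zero_smul]
  have hc' := h c hc.1
  rw [← add_sum_erase s _ hc.1, ← add_sum_erase s _ hc.1, sum_congr rfl hrest,
    add_left_inj] at hc'
  simp only [Nat.choose_self, prod_const_one, one_smul] at hc'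
  exact hc.2 hc'

theorem Nat.sum_range_choose_eq_choose_succ (N k : ℕ) :
    ∑ c ∈ range N, c.choose k = N.choose (k + 1) := by
  induction N with
  | zero => simp
  | succ N ih => rw [sum_range_succ, ih, Nat.choose_succ_succ', add_comm]

theorem card_filter_powersetCard_succ_mem_erase_subset {α : Type*} [Fintype α] [DecidableEq α]
    {a : α} {I : Finset α} (ha : a ∉ I) (k : ℕ) :
    #{T ∈ powersetCard (k + 1) univ | a ∈ T ∧ T.erase a ⊆ I} = (#I).choose k := by
  rw [← card_powersetCard]
  refine card_nbij' (·.erase a) (insert a) (fun T hT => ?_) (fun S hS => ?_)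
    (fun T hT => insert_erase (mem_filter.1 hT).2.1) (fun S hS => erase_insert ?_)
  · obtain ⟨-, hcard⟩ := mem_powersetCard.1 (mem_filter.1 hT).1
    obtain ⟨haT, hsub⟩ := (mem_filter.1 hT).2
    simp [mem_powersetCard, hsub, card_erase_of_mem haT, hcard]
  · obtain ⟨hsub, hcard⟩ := mem_powersetCard.1 hS
    have haS : a ∉ S := fun h => ha (hsub h)
    simp [haS, hsub, card_insert_of_notMem haS, hcard]
  · exact fun h => ha ((mem_powersetCard.1 hS).1 h)

theorem gridAdj_update {d : ℕ} {n : Fin d → ℕ} {v : ∀ i, Fin (n i)} {i : Fin d} {x : Fin (n i)}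
    (hx : x ≠ v i) :
    GridAdj v (Function.update v i x) :=
  ⟨i, by simpa using hx.symm, fun _ hj => (Function.update_of_ne hj _ _).symm⟩

theorem GridAdj.exists_eq_update {d : ℕ} {n : Fin d → ℕ} {v w : ∀ i, Fin (n i)}
    (h : GridAdj v w) :
    ∃ i, w i ≠ v i ∧ w = Function.update v i (w i) := by
  obtain ⟨i, hne, heq⟩ := h
  refine ⟨i, Ne.symm hne, funext fun j => ?_⟩
  rcases eq_or_ne j i with rfl | hj
  · simp
  · simp [Function.update_of_ne hj, heq j hj]

namespace GridUSO

open Function Fintype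

variable {d : ℕ}

noncomputable def subgrids (n k : Fin d → ℕ) : Finset (∀ i, Finset (Fin (n i))) :=
  piFinset fun i => powersetCard (k i) univ

variable {n : Fin d → ℕ} (orient : (∀ i, Fin (n i)) → (∀ i, Fin (n i)) → Prop)

open scoped Classical in
noncomputable def inNbrs (v : ∀ i, Fin (n i)) (i : Fin d) : Finset (Fin (n i)) :=
  {x ∈ univ.erase (v i) | ¬ orient v (update v i x)}

theorem mem_inNbrs {v : ∀ i, Fin (n i)} {i : Fin d} {x : Fin (n i)} :
    x ∈ inNbrs orient v i ↔ x ≠ v i ∧ ¬ orient v (update v i x) := by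
  simp [inNbrs]

theorem self_notMem_inNbrs (v : ∀ i, Fin (n i)) (i : Fin d) : v i ∉ inNbrs orient v i :=
  fun h => ((mem_inNbrs orient).1 h).1 rfl

theorem card_inNbrs_lt (v : ∀ i, Fin (n i)) (i : Fin d) : #(inNbrs orient v i) < n i := by
  simpa using card_lt_univ_of_notMem (self_notMem_inNbrs orient v i)

theorem outmapCount_add_card_inNbrs (v : ∀ i, Fin (n i)) (i : Fin d) :
    outmapCount orient v i + #(inNbrs orient v i) = n i - 1 := by
  classical
  have hout : outmapCount orient v i = #{x ∈ univ.erase (v i) | orient v (update v i x)} := by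
    rw [outmapCount, ← Set.ncard_coe_finset]
    congr 1
    ext x
    simp [and_comm]
  rw [hout, inNbrs, card_filter_add_card_filter_not, card_erase_of_mem (mem_univ _), card_univ,
    Fintype.card_fin]

theorem isSinkIn_iff (N : ∀ i, Finset (Fin (n i))) (v : ∀ i, Fin (n i)) :
    IsSinkIn orient (fun i => ↑(N i)) v ↔
      ∀ i, v i ∈ N i ∧ (N i).erase (v i) ⊆ inNbrs orient v i := by
  constructor
  · rintro ⟨hvN, hsink⟩ i
    refine ⟨hvN i, fun x hx => ?_⟩
    obtain ⟨hxv, hxN⟩ := mem_erase.1 hx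
    refine (mem_inNbrs orient).2 ⟨hxv, hsink _ (fun j => ?_) (gridAdj_update hxv)⟩
    rcases eq_or_ne j i with rfl | hj
    · simpa using hxN
    · simpa [update_of_ne hj] using hvN j
  · intro h
    refine ⟨fun i => (h i).1, fun w hwN hvw => ?_⟩
    obtain ⟨i, hwv, hw⟩ := GridAdj.exists_eq_update hvw
    have hwN : w i ∈ (N i).erase (v i) := mem_erase.2 ⟨hwv, by simpa using hwN i⟩
    rw [hw]
    exact ((mem_inNbrs orient).1 ((h i).2 hwN)).2

open scoped Classical in
theorem card_filter_isSinkIn (v : ∀ i, Fin (n i)) (j : Fin d → ℕ) :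
    #{N ∈ subgrids n (j + 1) |
      IsSinkIn orient (fun i => (N i : Set (Fin (n i)))) v} =
      ∏ i, (#(inNbrs orient v i)).choose (j i) := by
  have hfilter : {N ∈ subgrids n (j + 1) |
      IsSinkIn orient (fun i => (N i : Set (Fin (n i)))) v} = piFinset fun i =>
        {T ∈ powersetCard (j i + 1) univ | v i ∈ T ∧ T.erase (v i) ⊆ inNbrs orient v i} := by
    ext N
    simp only [subgrids, mem_filter, mem_piFinset, isSinkIn_iff, forall_and, Pi.add_apply,
      Pi.one_apply]
  rw [hfilter, card_piFinset]
  exact prod_congr rfl fun i _ =>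
    card_filter_powersetCard_succ_mem_erase_subset (self_notMem_inNbrs orient v i) _

theorem sum_prod_choose_card_inNbrs
    (huso : ∀ N : ∀ i, Set (Fin (n i)), (∀ i, (N i).Nonempty) → ∃! v, IsSinkIn orient N v)
    (j : Fin d → ℕ) :
    ∑ v, ∏ i, (#(inNbrs orient v i)).choose (j i) = ∏ i, (n i).choose (j i + 1) := by
  classical
  calc ∑ v, ∏ i, (#(inNbrs orient v i)).choose (j i)
      = ∑ v, #{N ∈ subgrids n (j + 1) | IsSinkIn orient (fun i => (N i : Set (Fin (n i)))) v} := by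
        simp_rw [card_filter_isSinkIn]
    _ = ∑ N ∈ subgrids n (j + 1), #{v | IsSinkIn orient (fun i => (N i : Set (Fin (n i)))) v} :=
        sum_card_bipartiteAbove_eq_sum_card_bipartiteBelow _
    _ = ∑ N ∈ subgrids n (j + 1), 1 := by
        refine sum_congr rfl fun N hN => (existsUnique_iff_card_one _).1 (huso _ fun i => ?_)
        have hcard := (mem_powersetCard.1 (mem_piFinset.1 hN i)).2
        exact coe_nonempty.2 (card_pos.1 (by simp [hcard]))
    _ = ∏ i, (n i).choose (j i + 1) := by simp [subgrids, card_piFinset]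

noncomputable def inmap (v : ∀ i, Fin (n i)) : Fin d → ℕ :=
  fun i => #(inNbrs orient v i)

theorem inmap_eq_sub_outmapCount (v : ∀ i, Fin (n i)) :
    inmap orient v = fun i => n i - 1 - outmapCount orient v i :=
  funext fun i => by have := outmapCount_add_card_inNbrs orient v i; simp only [inmap]; omega

theorem outmapCount_eq_sub_inmap (v : ∀ i, Fin (n i)) :
    outmapCount orient v = fun i => n i - 1 - inmap orient v i :=
  funext fun i => by have := outmapCount_add_card_inNbrs orient v i; simp only [inmap]; omega

theorem existsUnique_inmap_eq
    (huso : ∀ N : ∀ i, Set (Fin (n i)), (∀ i, (N i).Nonempty) → ∃! v, IsSinkIn orient N v)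
    {c : Fin d → ℕ} (hc : ∀ i, c i < n i) :
    ∃! v, inmap orient v = c := by
  classical
  set box : Finset (Fin d → ℕ) := piFinset fun i => range (n i) with hbox
  have hmaps : ∀ v ∈ univ, inmap orient v ∈ box :=
    fun v _ => mem_piFinset.2 fun i => mem_range.2 (card_inNbrs_lt orient v i)
  have htransform : ∀ j ∈ box,
      ∑ c ∈ box, (∏ i, (c i).choose (j i)) • #{v | inmap orient v = c} =
        ∑ c ∈ box, (∏ i, (c i).choose (j i)) • 1 := by
    intro j _
    calc ∑ c ∈ box, (∏ i, (c i).choose (j i)) • #{v | inmap orient v = c}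
        = ∑ v, ∏ i, (inmap orient v i).choose (j i) := by
          rw [← sum_fiberwise_of_maps_to' hmaps fun c => ∏ i, (c i).choose (j i)]
          simp_rw [sum_const, smul_eq_mul, mul_comm]
      _ = ∏ i, (n i).choose (j i + 1) := sum_prod_choose_card_inNbrs orient huso j
      _ = ∑ c ∈ box, (∏ i, (c i).choose (j i)) • 1 := by
          simp only [nsmul_eq_mul, Nat.cast_id, mul_one]
          rw [hbox, ← prod_univ_sum (fun i => range (n i)) fun i c => c.choose (j i)]
          simp_rw [Nat.sum_range_choose_eq_choose_succ]
  rw [existsUnique_iff_card_one]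
  exact eqOn_of_sum_prod_choose_smul_eq htransform (mem_piFinset.2 fun i => mem_range.2 (hc i))

end GridUSO

open GridUSO in
theorem stmt1_general {d : ℕ} {n : Fin d → ℕ}
    (orient : (∀ i, Fin (n i)) → (∀ i, Fin (n i)) → Prop)
    (huso : ∀ N : ∀ i, Set (Fin (n i)), (∀ i, (N i).Nonempty) →
      ∃! v, IsSinkIn orient N v) :
    (∀ v i, outmapCount orient v i < n i) ∧
    (Function.Injective (outmapCount orient)) ∧
    (∀ a : Fin d → ℕ, (∀ i, a i < n i) → ∃ v, outmapCount orient v = a) := by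
  refine ⟨fun v i => ?_, fun u v huv => ?_, fun a ha => ?_⟩
  · have := card_inNbrs_lt orient v i
    rw [outmapCount_eq_sub_inmap]
    simp only [inmap]
    omega
  · have hin : inmap orient v = inmap orient u := by
      rw [inmap_eq_sub_outmapCount, inmap_eq_sub_outmapCount, huv]
    exact (existsUnique_inmap_eq orient huso (card_inNbrs_lt orient u)).unique rfl hin
  · obtain ⟨v, hv, -⟩ := existsUnique_inmap_eq orient huso (c := fun i => n i - 1 - a i)
      fun i => by have := ha i; omega
    refine ⟨v, funext fun i => ?_⟩
    have := ha i
    rw [outmapCount_eq_sub_inmap, hv]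
    dsimp only
    omega

/-- In a grid unique sink orientation, the outmap is a bijection onto
`{0,…,n₁−1} × ⋯ × {0,…,n_d−1}`. -/
theorem stmt1 {d : ℕ} {n : Fin d → ℕ} (hn : ∀ i, 2 ≤ n i)
    (orient : (∀ i, Fin (n i)) → (∀ i, Fin (n i)) → Prop)
    (horient : ∀ u v, GridAdj u v → (orient u v ↔ ¬ orient v u))
    (huso : ∀ N : ∀ i, Set (Fin (n i)), (∀ i, (N i).Nonempty) →
      ∃! v, IsSinkIn orient N v) :
    (∀ v i, outmapCount orient v i < n i) ∧
    (Function.Injective (outmapCount orient)) ∧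
    (∀ a : Fin d → ℕ, (∀ i, a i < n i) → ∃ v, outmapCount orient v = a) :=
  stmt1_general orient huso
end

section
/- Let d ≥ 1 and for each i ∈ [d] let H_i be a finite family of closed half-space boundary functionals: concretely, suppose each color class H_i consists of n_i affine hyperplanes in ℝ^d (each given with an orientation), such that (H₁, ..., H_d) is well-separated, meaning for every sign vector s ∈ {+,−}^d there exists a point x_s lying strictly above every hyperplane of H_i when s_i = + and strictly below every hyperplane of H_i when s_i = −, and such that any d hyperplanes, one per color, intersect in a single point, and no point lies on d+1 hyperplanes. Then for every (α₁, ..., α_d) ∈ [n₁] × ... × [n_d], there exists a unique point x ∈ ℝ^d lying on exactly one hyperplane of each color i and lying strictly above exactly α_i − 1 hyperplanes of color i, for all i. -/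
/-!
Uniqueness: if `x ≠ y` had the same counts, a pigeonhole argument gives, for every color `i`,
one hyperplane of color `i` that does not decrease from `y` to `x` and one that does not
increase. A nonnegative combination `fᵢ` of the two is constant along `x - y`, so the linear
parts of `f₁, …, f_d` are linearly dependent, say `∑ μᵢ fᵢ` is constant. But each `fᵢ` keeps
the sign of its color class, so well-separation (with the sign pattern of `μ` and its
negation) makes that constant both positive and negative.

Existence: by non-degeneracy the vertex of a rainbow choice `κ` lies on exactly the
hyperplanes `κ i`, so recording how many hyperplanes of each color it lies strictly above maps
`∏ᵢ Fin nᵢ` to itself. By uniqueness this map is injective, hence surjective.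
-/

/-- The value of the affine functional defining the oriented hyperplane `h = (w, c)`
at the point `x`: the hyperplane is its zero set, a point is above (below) it iff the
value is positive (negative). -/
def aval {d : ℕ} (h : (Fin d → ℝ) × ℝ) (x : Fin d → ℝ) : ℝ :=
  (∑ j, h.1 j * x j) + h.2

open Finset Matrix

section
variable {d : ℕ}

lemma aval_eq_dotProduct (h : (Fin d → ℝ) × ℝ) (x : Fin d → ℝ) :
    aval h x = h.1 ⬝ᵥ x + h.2 := rfl

lemma aval_sub_aval (h : (Fin d → ℝ) × ℝ) (x y : Fin d → ℝ) :
    aval h x - aval h y = h.1 ⬝ᵥ (x - y) := by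
  simp only [aval_eq_dotProduct, dotProduct_sub]
  ring

lemma aval_sum_smul {ι : Type*} [Fintype ι] (μ : ι → ℝ) (f : ι → (Fin d → ℝ) × ℝ)
    (x : Fin d → ℝ) : aval (∑ i, μ i • f i) x = ∑ i, μ i * aval (f i) x := by
  simp only [aval_eq_dotProduct, Prod.fst_sum, Prod.snd_sum, Prod.smul_fst, Prod.smul_snd,
    sum_dotProduct, smul_dotProduct, smul_eq_mul, mul_add, sum_add_distrib]

lemma aval_smul_add_smul (p q : ℝ) (a b : (Fin d → ℝ) × ℝ) (x : Fin d → ℝ) :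
    aval (p • a + q • b) x = p * aval a x + q * aval b x := by
  simp only [aval_eq_dotProduct, Prod.fst_add, Prod.snd_add, Prod.smul_fst, Prod.smul_snd,
    add_dotProduct, smul_dotProduct, smul_eq_mul]
  ring

def FollowsSigns {ι : Type*} (G : ι → (Fin d → ℝ) × ℝ) (f : (Fin d → ℝ) × ℝ) : Prop :=
  ∀ x, ((∀ k, 0 < aval (G k) x) → 0 < aval f x) ∧ ((∀ k, aval (G k) x < 0) → aval f x < 0)

lemma followsSigns_smul_add_smul {ι : Type*} (G : ι → (Fin d → ℝ) × ℝ) {p q : ℝ}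
    (hp : 0 ≤ p) (hq : 0 < q) (k k' : ι) : FollowsSigns G (p • G k + q • G k') := by
  intro x
  rw [aval_smul_add_smul]
  constructor
  · intro hpos
    exact add_pos_of_nonneg_of_pos (mul_nonneg hp (hpos k).le) (mul_pos hq (hpos k'))
  · intro hneg
    exact add_neg_of_nonpos_of_neg (mul_nonpos_of_nonneg_of_nonpos hp (hneg k).le)
      (mul_neg_of_pos_of_neg hq (hneg k'))

lemma exists_followsSigns_dotProduct_eq_zero {ι : Type*} (G : ι → (Fin d → ℝ) × ℝ)
    (v : Fin d → ℝ) {k k' : ι} (hk : 0 ≤ (G k).1 ⬝ᵥ v) (hk' : (G k').1 ⬝ᵥ v ≤ 0) :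
    ∃ f, FollowsSigns G f ∧ f.1 ⬝ᵥ v = 0 := by
  rcases hk'.lt_or_eq with hneg | hzero
  · refine ⟨((G k).1 ⬝ᵥ v) • G k' + (-((G k').1 ⬝ᵥ v)) • G k,
      followsSigns_smul_add_smul G hk (neg_pos.mpr hneg) k' k, ?_⟩
    simp only [Prod.fst_add, Prod.smul_fst, add_dotProduct, smul_dotProduct, smul_eq_mul]
    ring
  · exact ⟨(0 : ℝ) • G k + (1 : ℝ) • G k', followsSigns_smul_add_smul G le_rfl one_pos k k',
      by simpa using hzero⟩

variable {n : Fin d → ℕ}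

def WellSeparated (H : ∀ i : Fin d, Fin (n i) → (Fin d → ℝ) × ℝ) : Prop :=
  ∀ s : Fin d → Bool, ∃ x : Fin d → ℝ, ∀ i k,
    (s i = true → 0 < aval (H i k) x) ∧ (s i = false → aval (H i k) x < 0)

def IsLevelPoint (H : ∀ i : Fin d, Fin (n i) → (Fin d → ℝ) × ℝ) (β : Fin d → ℕ)
    (x : Fin d → ℝ) : Prop :=
  ∀ i, {k : Fin (n i) | aval (H i k) x = 0}.ncard = 1 ∧
    {k : Fin (n i) | 0 < aval (H i k) x}.ncard = β i

variable {H : ∀ i : Fin d, Fin (n i) → (Fin d → ℝ) × ℝ}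

lemma WellSeparated.det_ne_zero (hsep : WellSeparated H) (f : Fin d → (Fin d → ℝ) × ℝ)
    (hf : ∀ i, FollowsSigns (H i) (f i)) : (Matrix.of fun i => (f i).1).det ≠ 0 := by
  have hconst_pos : ∀ μ : Fin d → ℝ, μ ≠ 0 → μ ᵥ* (Matrix.of fun i => (f i).1) = 0 →
      0 < (∑ i, μ i • f i).2 := by
    intro μ hμ hvecMul
    obtain ⟨x, hx⟩ := hsep fun i => decide (0 < μ i)
    have hterm : ∀ i, μ i ≠ 0 → 0 < μ i * aval (f i) x := by
      intro i hi
      rcases hi.lt_or_gt with hneg | hpos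
      · exact mul_pos_of_neg_of_neg hneg
          ((hf i x).2 fun k => (hx i k).2 (by simpa using hneg.le))
      · exact mul_pos hpos ((hf i x).1 fun k => (hx i k).1 (by simpa using hpos))
    have hlin : (∑ i, μ i • f i).1 = 0 := by
      rw [← hvecMul]
      ext j
      simp [vecMul, dotProduct, Prod.fst_sum, Finset.sum_apply]
    obtain ⟨i₀, hi₀⟩ := Function.ne_iff.mp hμ
    calc 0 < ∑ i, μ i * aval (f i) x := by
          refine sum_pos' (fun i _ => ?_) ⟨i₀, mem_univ _, hterm i₀ hi₀⟩
          by_cases hi : μ i = 0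
          · simp [hi]
          · exact (hterm i hi).le
      _ = (∑ i, μ i • f i).2 := by
          rw [← aval_sum_smul, aval_eq_dotProduct, hlin, zero_dotProduct, zero_add]
  intro hdet
  obtain ⟨μ, hμ, hvecMul⟩ := exists_vecMul_eq_zero_iff.mpr hdet
  have hpos := hconst_pos μ hμ hvecMul
  have hneg := hconst_pos (-μ) (neg_ne_zero.mpr hμ) (by rw [neg_vecMul, hvecMul, neg_zero])
  simp only [Pi.neg_apply, neg_smul, sum_neg_distrib, Prod.snd_neg] at hneg
  linarith

lemma ncard_setOf_nonneg {ι : Type*} [Finite ι] (g : ι → ℝ) :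
    {k | 0 ≤ g k}.ncard = {k | 0 < g k}.ncard + {k | g k = 0}.ncard := by
  rw [← Set.ncard_union_eq]
  · congr 1
    ext k
    simp [le_iff_lt_or_eq, eq_comm]
  · exact Set.disjoint_left.mpr fun k (hpos : 0 < g k) (hzero : g k = 0) => hpos.ne' hzero

lemma IsLevelPoint.exists_nonneg_nonpos {β : Fin d → ℕ} {x y : Fin d → ℝ}
    (hx : IsLevelPoint H β x) (hy : IsLevelPoint H β y) (i : Fin d) :
    ∃ k, 0 ≤ aval (H i k) x ∧ aval (H i k) y ≤ 0 := by
  have hlt : {k | 0 < aval (H i k) y}.ncard < {k | 0 ≤ aval (H i k) x}.ncard := by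
    rw [ncard_setOf_nonneg, (hx i).1, (hx i).2, (hy i).2]
    exact Nat.lt_succ_self _
  obtain ⟨k, hkx, hky⟩ := Set.exists_mem_notMem_of_ncard_lt_ncard hlt
  exact ⟨k, hkx, not_lt.mp hky⟩

theorem IsLevelPoint.eq (hsep : WellSeparated H) {β : Fin d → ℕ} {x y : Fin d → ℝ}
    (hx : IsLevelPoint H β x) (hy : IsLevelPoint H β y) : x = y := by
  by_contra hne
  have hflat : ∀ i, ∃ f, FollowsSigns (H i) f ∧ f.1 ⬝ᵥ (x - y) = 0 := by
    intro i
    obtain ⟨k, hkx, hky⟩ := hx.exists_nonneg_nonpos hy i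
    obtain ⟨k', hk'y, hk'x⟩ := hy.exists_nonneg_nonpos hx i
    refine exists_followsSigns_dotProduct_eq_zero (H i) (x - y) (k := k) (k' := k') ?_ ?_
    · rw [← aval_sub_aval]; linarith
    · rw [← aval_sub_aval]; linarith
  choose f hf hfv using hflat
  exact hsep.det_ne_zero f hf
    (exists_mulVec_eq_zero_iff.mp ⟨x - y, sub_ne_zero.mpr hne, funext hfv⟩)

lemma setOf_aval_eq_zero_eq_singleton
    (hnd : ∀ x : Fin d → ℝ,
      {p : (i : Fin d) × Fin (n i) | aval (H p.1 p.2) x = 0}.ncard ≤ d)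
    {κ : ∀ i, Fin (n i)} {x : Fin d → ℝ} (hx : ∀ i, aval (H i (κ i)) x = 0) (i : Fin d) :
    {k | aval (H i k) x = 0} = {κ i} := by
  have hrange : Set.range (fun j => (⟨j, κ j⟩ : (j : Fin d) × Fin (n j))) =
      {p | aval (H p.1 p.2) x = 0} := by
    refine Set.eq_of_subset_of_ncard_le ?_ ?_ (Set.toFinite _)
    · rintro _ ⟨j, rfl⟩
      exact hx j
    · rw [Set.ncard_range_of_injective fun a b h => congrArg Sigma.fst h]
      simpa using hnd x
  ext k
  refine ⟨fun hk => ?_, fun hk => hk ▸ hx i⟩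
  have hmem : (⟨i, k⟩ : (j : Fin d) × Fin (n j)) ∈ {p | aval (H p.1 p.2) x = 0} := hk
  rw [← hrange] at hmem
  obtain ⟨j, hj⟩ := hmem
  cases hj
  rfl

theorem exists_isLevelPoint (hsep : WellSeparated H)
    (hvertex : ∀ κ : ∀ i, Fin (n i), ∃ x : Fin d → ℝ, ∀ i, aval (H i (κ i)) x = 0)
    (hnd : ∀ x : Fin d → ℝ,
      {p : (i : Fin d) × Fin (n i) | aval (H p.1 p.2) x = 0}.ncard ≤ d)
    (β : ∀ i, Fin (n i)) : ∃ x, IsLevelPoint H (fun i => β i) x := by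
  choose v hv using hvertex
  have hzero κ := setOf_aval_eq_zero_eq_singleton hnd (hv κ)
  have hlt κ i : {k | 0 < aval (H i k) (v κ)}.ncard < n i := by
    have hsub : {k | 0 < aval (H i k) (v κ)} ⊂ Set.univ :=
      Set.ssubset_univ_iff.mpr <| (Set.ne_univ_iff_exists_notMem _).mpr ⟨κ i, by simp [hv κ i]⟩
    simpa using Set.ncard_lt_ncard hsub
  let count : (∀ i, Fin (n i)) → ∀ i, Fin (n i) := fun κ i => ⟨_, hlt κ i⟩
  have hlevel κ : IsLevelPoint H (fun i => count κ i) (v κ) := fun i =>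
    ⟨by rw [hzero κ i, Set.ncard_singleton], rfl⟩
  have hinj : Function.Injective count := by
    intro κ κ' h
    have hvv : v κ = v κ' := (hlevel κ).eq hsep (by rw [h]; exact hlevel κ')
    funext i
    have hmem : κ' i ∈ {k | aval (H i k) (v κ) = 0} := hvv ▸ hv κ' i
    rw [hzero κ i] at hmem
    exact hmem.symm
  obtain ⟨κ, rfl⟩ := Finite.injective_iff_surjective.mp hinj β
  exact ⟨v κ, hlevel κ⟩

end

theorem stmt7_general {d : ℕ} {n : Fin d → ℕ}
    (H : ∀ i : Fin d, Fin (n i) → (Fin d → ℝ) × ℝ)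
    (hsep : ∀ s : Fin d → Bool, ∃ x : Fin d → ℝ, ∀ i k,
      (s i = true → 0 < aval (H i k) x) ∧ (s i = false → aval (H i k) x < 0))
    (hrainbow : ∀ κ : ∀ i, Fin (n i), ∃! x : Fin d → ℝ, ∀ i, aval (H i (κ i)) x = 0)
    (hnd : ∀ x : Fin d → ℝ,
      {p : (i : Fin d) × Fin (n i) | aval (H p.1 p.2) x = 0}.ncard ≤ d)
    (α : Fin d → ℕ) (hα : ∀ i, 1 ≤ α i ∧ α i ≤ n i) :
    ∃! x : Fin d → ℝ, ∀ i,
      {k : Fin (n i) | aval (H i k) x = 0}.ncard = 1 ∧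
      {k : Fin (n i) | 0 < aval (H i k) x}.ncard = α i - 1 := by
  obtain ⟨x, hx⟩ := exists_isLevelPoint hsep (fun κ => (hrainbow κ).exists) hnd
    fun i => ⟨α i - 1, by have := hα i; omega⟩
  exact ⟨x, hx, fun y hy => IsLevelPoint.eq hsep hy hx⟩

/-- α-Ham-Sandwich for well-separated rainbow arrangements of affine hyperplanes:
there is a unique point on exactly one hyperplane of each color and strictly above
exactly `α i − 1` hyperplanes of each color `i`. -/
theorem stmt7 {d : ℕ} (hd : 1 ≤ d) {n : Fin d → ℕ}
    (H : ∀ i : Fin d, Fin (n i) → (Fin d → ℝ) × ℝ)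
    (hnz : ∀ i k, (H i k).1 ≠ 0)
    (hsep : ∀ s : Fin d → Bool, ∃ x : Fin d → ℝ, ∀ i k,
      (s i = true → 0 < aval (H i k) x) ∧ (s i = false → aval (H i k) x < 0))
    (hrainbow : ∀ κ : ∀ i, Fin (n i), ∃! x : Fin d → ℝ, ∀ i, aval (H i (κ i)) x = 0)
    (hnd : ∀ x : Fin d → ℝ,
      {p : (i : Fin d) × Fin (n i) | aval (H p.1 p.2) x = 0}.ncard ≤ d)
    (α : Fin d → ℕ) (hα : ∀ i, 1 ≤ α i ∧ α i ≤ n i) :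
    ∃! x : Fin d → ℝ, ∀ i,
      {k : Fin (n i) | aval (H i k) x = 0}.ncard = 1 ∧
      {k : Fin (n i) | 0 < aval (H i k) x}.ncard = α i - 1 :=
  stmt7_general H hsep hrainbow hnd α hα
end

section
/- Let H₁, ..., H_d be finite sets of oriented affine hyperplanes in ℝ^d with |H_i| = n_i, satisfying the rainbow condition (every colorful d-tuple of hyperplanes meets in a single point) and non-degeneracy (no point lies on more than d hyperplanes). Suppose that for every α ∈ [n₁] × ... × [n_d] there exists at least one point x_α lying on exactly one hyperplane of each color and strictly above exactly α_i − 1 hyperplanes of color i for each i. Then each such point x_α is unique, i.e., the map α ↦ x_α is injective onto the set of colorful intersection points, and since there are exactly n₁⋯n_d colorful intersection candidates and n₁⋯n_d values of α, for each α the point x_α is uniquely determined. -/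
/-!
Every point realizing some `α` lies on exactly one hyperplane of each color, so it is the
intersection point of a colorful tuple; and the point determines `α`, since `α i - 1` is the
number of hyperplanes of color `i` it lies above. Choosing one realizer per `α` therefore gives an
injection from the `n₁ ⋯ n_d` signatures into the `n₁ ⋯ n_d` colorful tuples, which must be a
bijection. Hence every realizer of `α` is the intersection point of a tuple already hit by the
chosen realizer of some `β`, hence equals it, and then `β = α`.
-/

/-- Pigeonhole: nonempty disjoint sets `R a`, covered by as many subsingletons `Q t`,
are singletons. -/
theorem existsUnique_of_pigeonhole {τ P : Type*} [Finite τ] (Q R : τ → P → Prop)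
    (hQ : ∀ t y z, Q t y → Q t z → y = z) (hRQ : ∀ a y, R a y → ∃ t, Q t y)
    (hR : ∀ a b y, R a y → R b y → a = b) (hex : ∀ a, ∃ y, R a y) (a : τ) :
    ∃! y, R a y := by
  choose x hx using hex
  choose g hg using fun a => hRQ a (x a) (hx a)
  have hg_inj : Function.Injective g := fun a b hab =>
    hR a b (x a) (hx a) (hQ (g b) (x b) (x a) (hg b) (hab ▸ hg a) ▸ hx b)
  refine ⟨x a, hx a, fun y hy => ?_⟩
  obtain ⟨t, hty⟩ := hRQ a y hy
  obtain ⟨b, rfl⟩ := (Finite.surjective_of_injective hg_inj) t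
  have hyb : y = x b := hQ (g b) y (x b) hty (hg b)
  obtain rfl : a = b := hR a b y hy (hyb ▸ hx b)
  exact hyb

section Arrangement

variable {d : ℕ} {n : Fin d → ℕ} (H : ∀ i : Fin d, Fin (n i) → (Fin d → ℝ) × ℝ)

/-- `x` is a point `x_α` of the paper. -/
def Realizes (α : Fin d → ℕ) (x : Fin d → ℝ) : Prop :=
  ∀ i, {k : Fin (n i) | aval (H i k) x = 0}.ncard = 1 ∧
    {k : Fin (n i) | 0 < aval (H i k) x}.ncard = α i - 1

variable {H}

theorem Realizes.exists_colorful {α : Fin d → ℕ} {x : Fin d → ℝ} (hx : Realizes H α x) :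
    ∃ κ : ∀ i, Fin (n i), ∀ i, aval (H i (κ i)) x = 0 := by
  choose κ hκ using fun i => Set.ncard_eq_one.mp (hx i).1
  exact ⟨κ, fun i => show κ i ∈ {k | aval (H i k) x = 0} from (hκ i).symm ▸ rfl⟩

theorem eq_of_realizes_succ {κ κ' : ∀ i, Fin (n i)} {x : Fin d → ℝ}
    (hκ : Realizes H (fun i => (κ i : ℕ) + 1) x) (hκ' : Realizes H (fun i => (κ' i : ℕ) + 1) x) :
    κ = κ' :=
  funext fun i => Fin.ext <| by simpa using (hκ i).2.symm.trans (hκ' i).2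

end Arrangement

theorem stmt8_general {d : ℕ} {n : Fin d → ℕ}
    (H : ∀ i : Fin d, Fin (n i) → (Fin d → ℝ) × ℝ)
    (hrainbow : ∀ κ : ∀ i, Fin (n i), ∃! x : Fin d → ℝ, ∀ i, aval (H i (κ i)) x = 0)
    (hex : ∀ α : Fin d → ℕ, (∀ i, 1 ≤ α i ∧ α i ≤ n i) →
      ∃ x : Fin d → ℝ, ∀ i,
        {k : Fin (n i) | aval (H i k) x = 0}.ncard = 1 ∧
        {k : Fin (n i) | 0 < aval (H i k) x}.ncard = α i - 1) :
    ∀ α : Fin d → ℕ, (∀ i, 1 ≤ α i ∧ α i ≤ n i) →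
      ∃! x : Fin d → ℝ, ∀ i,
        {k : Fin (n i) | aval (H i k) x = 0}.ncard = 1 ∧
        {k : Fin (n i) | 0 < aval (H i k) x}.ncard = α i - 1 := by
  intro α hα
  let κ : ∀ i, Fin (n i) := fun i => ⟨α i - 1, by have := hα i; omega⟩
  have hακ : α = fun i => (κ i : ℕ) + 1 := funext fun i => by have := hα i; simp only [κ]; omega
  rw [hακ]
  exact existsUnique_of_pigeonhole (fun t x => ∀ i, aval (H i (t i)) x = 0)
    (fun t x => Realizes H (fun i => (t i : ℕ) + 1) x)
    (fun t _ _ => (hrainbow t).unique) (fun _ _ hx => hx.exists_colorful)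
    (fun _ _ _ => eq_of_realizes_succ)
    (fun t => hex (fun i => (t i : ℕ) + 1) fun i => ⟨Nat.le_add_left 1 _, (t i).isLt⟩) κ

/-- Uniqueness via counting: in a rainbow, non-degenerate arrangement, if for every
valid `α` some point realizes `α`, then for every valid `α` that point is unique. -/
theorem stmt8 {d : ℕ} (hd : 1 ≤ d) {n : Fin d → ℕ}
    (H : ∀ i : Fin d, Fin (n i) → (Fin d → ℝ) × ℝ)
    (hnz : ∀ i k, (H i k).1 ≠ 0)
    (hrainbow : ∀ κ : ∀ i, Fin (n i), ∃! x : Fin d → ℝ, ∀ i, aval (H i (κ i)) x = 0)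
    (hnd : ∀ x : Fin d → ℝ,
      {p : (i : Fin d) × Fin (n i) | aval (H p.1 p.2) x = 0}.ncard ≤ d)
    (hex : ∀ α : Fin d → ℕ, (∀ i, 1 ≤ α i ∧ α i ≤ n i) →
      ∃ x : Fin d → ℝ, ∀ i,
        {k : Fin (n i) | aval (H i k) x = 0}.ncard = 1 ∧
        {k : Fin (n i) | 0 < aval (H i k) x}.ncard = α i - 1) :
    ∀ α : Fin d → ℕ, (∀ i, 1 ≤ α i ∧ α i ≤ n i) →
      ∃! x : Fin d → ℝ, ∀ i,
        {k : Fin (n i) | aval (H i k) x = 0}.ncard = 1 ∧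
        {k : Fin (n i) | 0 < aval (H i k) x}.ncard = α i - 1 :=
  stmt8_general H hrainbow hex
end

section
/- Let (P₁, P₂) be two finite point sets in ℝ² that are well-separated (there is a line strictly separating conv(P₁) from conv(P₂)) and in weak general position (no line through one point of P₁ and one point of P₂ contains any other point of P₁ ∪ P₂). Then for every (α₁, α₂) ∈ [|P₁|] × [|P₂|] there exists exactly one oriented line ℓ passing through one point p₁ ∈ P₁ and one point p₂ ∈ P₂ (oriented from p₁ to p₂) such that exactly α₁ − 1 points of P₁ and exactly α₂ − 1 points of P₂ lie strictly to the right of ℓ. -/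
/-!
The pairs `(p₁, p₂) ∈ P₁ × P₂` are mapped to their pairs of right counts, which lie in
`[0, |P₁|) × [0, |P₂|)`, a set of the same size as `P₁ × P₂`; so it suffices to show that this
map is injective. In coordinates in which the separating line is vertical, the spanning lines
are graphs of affine functions. Two different spanning lines differ by an affine function, which
has a constant strict sign on one side of the separating line; there one of them lies strictly
below the other, and the higher one has, besides every point of that side's set lying below the
lower one, also the lower one's endpoint below it. Weak general position makes different pairs
span different lines.
-/

/-- The determinant of the 3×3 matrix with rows `(p₁,1), (p₂,1), (q,1)`:
`q` lies to the right of (below) the line oriented from `p₁` to `p₂` iff this is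
negative, and to the left (above) iff it is positive. -/
def det3 (p₁ p₂ q : ℝ × ℝ) : ℝ :=
  (p₂.1 - p₁.1) * (q.2 - p₁.2) - (p₂.2 - p₁.2) * (q.1 - p₁.1)

open Finset

lemma det3_self_left (p₁ p₂ : ℝ × ℝ) : det3 p₁ p₂ p₁ = 0 := by simp [det3]

lemma det3_self_right (p₁ p₂ : ℝ × ℝ) : det3 p₁ p₂ p₂ = 0 := by simp [det3, mul_comm]

/-- In the coordinates `(a x + b y, -b x + a y)`, `(a² + b²) * lineOffset a b p₁ p₂ r` is the
height of `r` above the line `p₁p₂` (`exists_lineOffset_eq`). -/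
noncomputable def lineOffset (a b : ℝ) (p₁ p₂ r : ℝ × ℝ) : ℝ :=
  det3 p₁ p₂ r / (a * (p₂.1 - p₁.1) + b * (p₂.2 - p₁.2))

section
variable {a b : ℝ} {p₁ p₂ q₁ q₂ r : ℝ × ℝ}

lemma lineOffset_left : lineOffset a b p₁ p₂ p₁ = 0 := by simp [lineOffset, det3_self_left]

lemma lineOffset_right : lineOffset a b p₁ p₂ p₂ = 0 := by simp [lineOffset, det3_self_right]

lemma lineOffset_neg_iff (h : a * p₁.1 + b * p₁.2 < a * p₂.1 + b * p₂.2) :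
    lineOffset a b p₁ p₂ r < 0 ↔ det3 p₁ p₂ r < 0 := by
  rw [lineOffset, div_lt_iff₀ (by linarith), zero_mul]

lemma lineOffset_eq_zero_iff (h : a * p₁.1 + b * p₁.2 < a * p₂.1 + b * p₂.2) :
    lineOffset a b p₁ p₂ r = 0 ↔ det3 p₁ p₂ r = 0 := by
  simp [lineOffset, div_eq_zero_iff, show a * (p₂.1 - p₁.1) + b * (p₂.2 - p₁.2) ≠ 0 by linarith]

lemma exists_lineOffset_eq (h : a * p₁.1 + b * p₁.2 ≠ a * p₂.1 + b * p₂.2) :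
    ∃ s t : ℝ, ∀ r, (a ^ 2 + b ^ 2) * lineOffset a b p₁ p₂ r =
      -b * r.1 + a * r.2 - s * (a * r.1 + b * r.2) - t := by
  have hd : a * (p₂.1 - p₁.1) + b * (p₂.2 - p₁.2) ≠ 0 := fun h' => h (by linarith)
  set s := (-b * (p₂.1 - p₁.1) + a * (p₂.2 - p₁.2)) / (a * (p₂.1 - p₁.1) + b * (p₂.2 - p₁.2))
  refine ⟨s, -b * p₁.1 + a * p₁.2 - s * (a * p₁.1 + b * p₁.2), fun r => ?_⟩
  simp only [lineOffset, det3, s]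
  field_simp
  ring

lemma exists_lineOffset_sub_eq (hp : a * p₁.1 + b * p₁.2 ≠ a * p₂.1 + b * p₂.2)
    (hq : a * q₁.1 + b * q₁.2 ≠ a * q₂.1 + b * q₂.2) :
    ∃ μ ν : ℝ, ∀ r, lineOffset a b p₁ p₂ r - lineOffset a b q₁ q₂ r =
      μ * (a * r.1 + b * r.2) + ν := by
  have hk : a ^ 2 + b ^ 2 ≠ 0 := by
    rintro hk
    obtain ⟨rfl, rfl⟩ : a = 0 ∧ b = 0 := ⟨by nlinarith, by nlinarith⟩
    simp at hp
  obtain ⟨s, t, hst⟩ := exists_lineOffset_eq hp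
  obtain ⟨s', t', hst'⟩ := exists_lineOffset_eq hq
  refine ⟨(s' - s) / (a ^ 2 + b ^ 2), (t' - t) / (a ^ 2 + b ^ 2), fun r => ?_⟩
  field_simp
  linear_combination hst r - hst' r

end

lemma affine_sign_const_on_Ioi_or_Iio {μ ν : ℝ} (h : μ ≠ 0 ∨ ν ≠ 0) (c : ℝ) :
    (∀ t ∈ Set.Ioi c, 0 < μ * t + ν) ∨ (∀ t ∈ Set.Ioi c, μ * t + ν < 0) ∨
      (∀ t ∈ Set.Iio c, 0 < μ * t + ν) ∨ (∀ t ∈ Set.Iio c, μ * t + ν < 0) := by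
  simp only [Set.mem_Ioi, Set.mem_Iio]
  rcases lt_trichotomy μ 0 with hμ | rfl | hμ
  · rcases le_or_gt (μ * c + ν) 0 with hc | hc
    · exact Or.inr <| Or.inl fun t ht => by nlinarith
    · exact Or.inr <| Or.inr <| Or.inl fun t ht => by nlinarith
  · rcases (h.resolve_left (not_not.mpr rfl)).lt_or_gt with hν | hν
    · exact Or.inr <| Or.inl fun t _ => by simpa
    · exact Or.inl fun t _ => by simpa
  · rcases le_or_gt 0 (μ * c + ν) with hc | hc
    · exact Or.inl fun t ht => by nlinarith
    · exact Or.inr <| Or.inr <| Or.inr fun t ht => by nlinarith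

lemma card_filter_neg_lt_of_lt {α : Type*} {s : Finset α} {F G : α → ℝ}
    (hGF : ∀ r ∈ s, G r < F r) {x : α} (hx : x ∈ s) (hFx : F x = 0) :
    #{r ∈ s | F r < 0} < #{r ∈ s | G r < 0} := by
  refine card_lt_card ((ssubset_iff_of_subset fun r hr => ?_).mpr ⟨x, ?_, ?_⟩)
  · rw [mem_filter] at hr ⊢
    exact ⟨hr.1, (hGF r hr.1).trans hr.2⟩
  · simpa [hx, hFx] using hGF x hx
  · simp [hFx]

noncomputable def rightCount (s : Finset (ℝ × ℝ)) (p₁ p₂ : ℝ × ℝ) : ℕ :=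
  #{q ∈ s | det3 p₁ p₂ q < 0}

section
variable {a b : ℝ} {p₁ p₂ q₁ q₂ : ℝ × ℝ} {s : Finset (ℝ × ℝ)}

lemma rightCount_lt_card {x : ℝ × ℝ} (hx : x ∈ s) (hx0 : det3 p₁ p₂ x = 0) :
    rightCount s p₁ p₂ < #s :=
  card_lt_card (filter_ssubset.mpr ⟨x, hx, by simp [hx0]⟩)

lemma ncard_setOf_det3_neg :
    {q | q ∈ s ∧ det3 p₁ p₂ q < 0}.ncard = rightCount s p₁ p₂ := by
  rw [rightCount, ← Set.ncard_coe_finset, coe_filter]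

lemma rightCount_lt_of_lineOffset_lt (hp : a * p₁.1 + b * p₁.2 < a * p₂.1 + b * p₂.2)
    (hq : a * q₁.1 + b * q₁.2 < a * q₂.1 + b * q₂.2)
    (h : ∀ r ∈ s, lineOffset a b q₁ q₂ r < lineOffset a b p₁ p₂ r) {x : ℝ × ℝ} (hx : x ∈ s)
    (hx0 : lineOffset a b p₁ p₂ x = 0) :
    rightCount s p₁ p₂ < rightCount s q₁ q₂ := by
  simp only [rightCount, ← lineOffset_neg_iff hp, ← lineOffset_neg_iff hq]
  exact card_filter_neg_lt_of_lt h hx hx0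

end

section
variable {P₁ P₂ : Finset (ℝ × ℝ)} {a b c : ℝ}

lemma eq_of_lineOffset_eq (h₁ : ∀ p ∈ P₁, a * p.1 + b * p.2 < c)
    (h₂ : ∀ q ∈ P₂, c < a * q.1 + b * q.2)
    (hwgp : ∀ p₁ ∈ P₁, ∀ p₂ ∈ P₂, ∀ q ∈ P₁ ∪ P₂, q ≠ p₁ → q ≠ p₂ → det3 p₁ p₂ q ≠ 0)
    {p₁ p₂ q₁ q₂ : ℝ × ℝ} (hp₁ : p₁ ∈ P₁) (hp₂ : p₂ ∈ P₂) (hq₁ : q₁ ∈ P₁) (hq₂ : q₂ ∈ P₂)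
    (h : ∀ r, lineOffset a b p₁ p₂ r = lineOffset a b q₁ q₂ r) : p₁ = q₁ ∧ p₂ = q₂ := by
  have hfq := (h₁ _ hq₁).trans (h₂ _ hq₂)
  have mem_line : ∀ x ∈ P₁ ∪ P₂, lineOffset a b p₁ p₂ x = 0 → x = q₁ ∨ x = q₂ := by
    intro x hx hx0
    by_contra! hne
    exact hwgp q₁ hq₁ q₂ hq₂ x hx hne.1 hne.2 ((lineOffset_eq_zero_iff hfq).mp (h x ▸ hx0))
  refine ⟨(mem_line p₁ (mem_union_left _ hp₁) lineOffset_left).resolve_right ?_,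
    (mem_line p₂ (mem_union_right _ hp₂) lineOffset_right).resolve_left ?_⟩
  · rintro rfl
    exact (h₁ _ hp₁).not_gt (h₂ _ hq₂)
  · rintro rfl
    exact (h₁ _ hq₁).not_gt (h₂ _ hp₂)

theorem injOn_rightCount (h₁ : ∀ p ∈ P₁, a * p.1 + b * p.2 < c)
    (h₂ : ∀ q ∈ P₂, c < a * q.1 + b * q.2)
    (hwgp : ∀ p₁ ∈ P₁, ∀ p₂ ∈ P₂, ∀ q ∈ P₁ ∪ P₂, q ≠ p₁ → q ≠ p₂ → det3 p₁ p₂ q ≠ 0) :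
    Set.InjOn (fun pq : (ℝ × ℝ) × (ℝ × ℝ) ↦ (rightCount P₁ pq.1 pq.2, rightCount P₂ pq.1 pq.2))
      ↑(P₁ ×ˢ P₂) := by
  rintro ⟨p₁, p₂⟩ hp ⟨q₁, q₂⟩ hq heq
  simp only [coe_product, Set.mem_prod, mem_coe, Prod.mk.injEq] at hp hq heq ⊢
  have hfp := (h₁ _ hp.1).trans (h₂ _ hp.2)
  have hfq := (h₁ _ hq.1).trans (h₂ _ hq.2)
  obtain ⟨μ, ν, hμν⟩ := exists_lineOffset_sub_eq hfp.ne hfq.ne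
  by_cases hline : μ = 0 ∧ ν = 0
  · refine eq_of_lineOffset_eq h₁ h₂ hwgp hp.1 hp.2 hq.1 hq.2 fun r => ?_
    simpa [hline, sub_eq_zero] using hμν r
  rcases affine_sign_const_on_Ioi_or_Iio (not_and_or.mp hline) c with h | h | h | h
  · refine absurd heq.2 (rightCount_lt_of_lineOffset_lt hfp hfq (fun r hr => ?_) hp.2
      lineOffset_right).ne
    linarith [hμν r, h _ (h₂ r hr)]
  · refine absurd heq.2 (rightCount_lt_of_lineOffset_lt hfq hfp (fun r hr => ?_) hq.2
      lineOffset_right).ne'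
    linarith [hμν r, h _ (h₂ r hr)]
  · refine absurd heq.1 (rightCount_lt_of_lineOffset_lt hfp hfq (fun r hr => ?_) hp.1
      lineOffset_left).ne
    linarith [hμν r, h _ (h₁ r hr)]
  · refine absurd heq.1 (rightCount_lt_of_lineOffset_lt hfq hfp (fun r hr => ?_) hq.1
      lineOffset_left).ne'
    linarith [hμν r, h _ (h₁ r hr)]

end

/-- Planar α-Ham-Sandwich: for two well-separated finite planar point sets in weak
general position, for every valid `(α₁, α₂)` there is exactly one oriented line
through a point of each set with exactly `αᵢ − 1` points of `Pᵢ` strictly to its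
right. -/
theorem stmt14 (P₁ P₂ : Finset (ℝ × ℝ))
    (hsep : ∃ a bb c : ℝ, (a, bb) ≠ ((0 : ℝ), (0 : ℝ)) ∧
      (∀ p ∈ P₁, a * p.1 + bb * p.2 < c) ∧ (∀ q ∈ P₂, c < a * q.1 + bb * q.2))
    (hwgp : ∀ p₁ ∈ P₁, ∀ p₂ ∈ P₂, ∀ q ∈ P₁ ∪ P₂, q ≠ p₁ → q ≠ p₂ →
      det3 p₁ p₂ q ≠ 0)
    (α₁ α₂ : ℕ) (h₁ : 1 ≤ α₁ ∧ α₁ ≤ P₁.card) (h₂ : 1 ≤ α₂ ∧ α₂ ≤ P₂.card) :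
    ∃! pq : (ℝ × ℝ) × (ℝ × ℝ), pq.1 ∈ P₁ ∧ pq.2 ∈ P₂ ∧
      {q : ℝ × ℝ | q ∈ P₁ ∧ det3 pq.1 pq.2 q < 0}.ncard = α₁ - 1 ∧
      {q : ℝ × ℝ | q ∈ P₂ ∧ det3 pq.1 pq.2 q < 0}.ncard = α₂ - 1 := by
  obtain ⟨a, b, c, -, hP₁, hP₂⟩ := hsep
  set counts := fun pq : (ℝ × ℝ) × (ℝ × ℝ) ↦ (rightCount P₁ pq.1 pq.2, rightCount P₂ pq.1 pq.2)
  have hinj : Set.InjOn counts ↑(P₁ ×ˢ P₂) := injOn_rightCount hP₁ hP₂ hwgp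
  have hmaps : Set.MapsTo counts ↑(P₁ ×ˢ P₂) ↑(range #P₁ ×ˢ range #P₂) := by
    rintro ⟨p₁, p₂⟩ hp
    simp only [coe_product, Set.mem_prod, mem_coe, mem_range] at hp ⊢
    exact ⟨rightCount_lt_card hp.1 (det3_self_left _ _),
      rightCount_lt_card hp.2 (det3_self_right _ _)⟩
  obtain ⟨pq, hpq, hcounts⟩ := surjOn_of_injOn_of_card_le counts hmaps hinj
    (by simp [card_product]) (show (α₁ - 1, α₂ - 1) ∈ _ by
      simp only [coe_product, Set.mem_prod, mem_coe, mem_range]; omega)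
  simp only [ncard_setOf_det3_neg]
  refine ⟨pq, ?_, fun pq' ⟨hpq'₁, hpq'₂, hcount₁, hcount₂⟩ => hinj ?_ hpq ?_⟩
  · simp only [coe_product, Set.mem_prod, mem_coe] at hpq
    simp only [counts, Prod.mk.injEq] at hcounts
    exact ⟨hpq.1, hpq.2, hcounts.1, hcounts.2⟩
  · simp [hpq'₁, hpq'₂]
  · simp only [counts, hcount₁, hcount₂, hcounts]
end
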